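/- Let F be a finite family of pseudo-lines such that any two distinct members cross exactly once and no three distinct members take a common value at a common point. Let p, q ∈ F satisfy p ≺ q with crossing at x₀, and set y₀ = p(x₀). Let L = {a ∈ F : a(x₀) < y₀ and a ≺ p} and let E be the upper envelope of L ∪ {p}. If m ∈ F satisfies m(x₀) > y₀ and there exists a ∈ L ∪ {p} with a ≺ m, then there exists x < x₀ with m(x) = E(x); in particular, at such x there is e ∈ L ∪ {p} with m(x) = e(x) = E(x), i.e., m crosses the upper envelope of L ∪ {p} strictly to the left of the crossing of p and q. -/
import Mathlib


noncomputable local instance : DecidableEq (ℝ → ℝ) := Classical.decEq _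

/-- `Prec f g` (written `f ≺ g`): the pseudo-lines `f` and `g` cross exactly once,
at a point `x₀` with `f x > g x` for all `x < x₀` and `f x < g x` for all `x > x₀`. -/
def Prec (f g : ℝ → ℝ) : Prop :=
  ∃ x₀ : ℝ, f x₀ = g x₀ ∧ (∀ x < x₀, g x < f x) ∧ (∀ x > x₀, f x < g x)

/-- Two pseudo-lines cross exactly once. -/
def CrossesOnce (f g : ℝ → ℝ) : Prop :=
  Prec f g ∨ Prec g f

/-- A pseudo-line `m` above the crossing `pq` that starts below some member of
`L(pq) ∪ {p}` crosses the upper envelope of `L(pq) ∪ {p}` strictly to the left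
of the crossing of `p` and `q`. -/
theorem crosses_upper_envelope_left_of_pq
    (F : Finset (ℝ → ℝ))
    (hcont : ∀ f ∈ F, Continuous f)
    (hcross : ∀ f ∈ F, ∀ g ∈ F, f ≠ g → CrossesOnce f g)
    (hnothree : ∀ f ∈ F, ∀ g ∈ F, ∀ h ∈ F, f ≠ g → f ≠ h → g ≠ h →
      ∀ x : ℝ, ¬(f x = g x ∧ g x = h x))
    -- `p ≺ q` with crossing at `x₀`, and `y₀ = p x₀`:
    (p q : ℝ → ℝ) (hp : p ∈ F) (hq : q ∈ F) (x₀ : ℝ)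
    (hpq : p x₀ = q x₀)
    (hpq₁ : ∀ x < x₀, q x < p x) (hpq₂ : ∀ x > x₀, p x < q x)
    -- `L = L(pq) = {a ∈ F : a x₀ < y₀ and a ≺ p}`:
    (L : Finset (ℝ → ℝ))
    (hLdef : ∀ a, a ∈ L ↔ a ∈ F ∧ a x₀ < p x₀ ∧ Prec a p)
    -- `m` is above the crossing and some `a ∈ L ∪ {p}` satisfies `a ≺ m`:
    (m : ℝ → ℝ) (hm : m ∈ F) (hmabove : p x₀ < m x₀)
    (ha : ∃ a ∈ insert p L, Prec a m) :
    ∃ x < x₀, ∃ e ∈ insert p L, m x = e x ∧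
      e x = (insert p L).sup' (Finset.insert_nonempty p L) (fun f => f x) := by
  classical
  set S := insert p L with hS
  have hSne : S.Nonempty := Finset.insert_nonempty p L
  set E : ℝ → ℝ := fun x => S.sup' hSne (fun f => f x) with hE
  have hSF : ∀ f ∈ S, f ∈ F := by
    intro f hf
    rcases Finset.mem_insert.1 hf with rfl | hf
    · exact hp
    · exact ((hLdef f).1 hf).1
  have hEcont : Continuous E :=
    Continuous.finset_sup'_apply hSne fun f hf => hcont f (hSF f hf)
  have hEx₀ : E x₀ ≤ p x₀ := by
    apply Finset.sup'_le
    intro f hf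
    rcases Finset.mem_insert.1 hf with rfl | hf
    · exact le_rfl
    · exact le_of_lt ((hLdef f).1 hf).2.1
  obtain ⟨a, haS, x₁, hax₁, hlt₁, hlt₂⟩ := ha
  have hax₀ : a x₀ ≤ p x₀ := by
    rcases Finset.mem_insert.1 haS with rfl | hf
    · exact le_rfl
    · exact le_of_lt ((hLdef a).1 hf).2.1
  have hx₁lt : x₁ < x₀ := by
    by_contra h
    push_neg at h
    rcases eq_or_lt_of_le h with rfl | h
    · exact absurd hax₁ (by linarith)
    · have := hlt₁ x₀ h; linarith
  set x' : ℝ := x₁ - 1 with hx'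
  have hmx' : m x' < E x' := by
    have h1 : m x' < a x' := hlt₁ x' (by simp [hx'])
    have h2 : a x' ≤ E x' := Finset.le_sup' (fun f => f x') haS
    linarith
  have hmx₀ : E x₀ < m x₀ := lt_of_le_of_lt hEx₀ hmabove
  have hcontm : Continuous m := hcont m hm
  have hcontg : Continuous (fun x => E x - m x) := hEcont.sub hcontm
  have hx'le : x' ≤ x₀ := by linarith
  have hiv := intermediate_value_Icc' hx'le hcontg.continuousOn
  have h0mem : (0 : ℝ) ∈ Set.Icc (E x₀ - m x₀) (E x' - m x') :=
    ⟨by linarith, by linarith⟩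
  obtain ⟨x, hxmem, hx0⟩ := hiv h0mem
  have hxx₀ : x < x₀ := by
    rcases lt_or_eq_of_le hxmem.2 with h | rfl
    · exact h
    · exfalso; simp only at hx0; linarith
  have hmE : m x = E x := by simp only at hx0; linarith
  obtain ⟨e, heS, heE⟩ := Finset.exists_mem_eq_sup' hSne (fun f => f x)
  exact ⟨x, hxx₀, e, heS, by rw [hmE, hE]; exact heE, heE.symm⟩
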